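/- There exist sets A, B ⊆ ℕ such that the natural densities of A and of B both exist, but the natural density of A ∩ B does not exist (the relative frequencies |A ∩ B ∩ {1,…,n}| / n do not converge). -/

import Mathlib

open Filter Topology

/-!
Let `A` be the even numbers and `B = {n | Even n ↔ n / 2 ∈ X}`. Each contains exactly one of
`2k, 2k+1` for every `k`, so both have density `1/2`, while `A ∩ B = 2X` has a density only if
`X` does. Take `X = {k | ⌊log₂ k⌋ even}`: with `n = 2^t - 1`, the block `(n, 2n]` lies in one
dyadic range `[2^t, 2^(t+1))`, so it is contained in `X` or disjoint from it according to the
parity of `t`. A density `d` of `X` would be the limit of `(cnt X (2n) - cnt X n) / n`, hence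
both `1` and `0`.
-/

/-- Number of elements of `A` among `{1, …, n}`. -/
noncomputable def cnt (A : Set ℕ) (n : ℕ) : ℕ :=
  Nat.card (A ∩ Set.Icc 1 n : Set ℕ)

/-- `A ⊆ ℕ` has natural density `p`: the relative frequencies `|A ∩ {1,…,n}| / n`
converge to `p` as `n → ∞`. -/
def HasDensity (A : Set ℕ) (p : ℝ) : Prop :=
  Tendsto (fun n : ℕ => (cnt A n : ℝ) / n) atTop (𝓝 p)

/-- `S` is an admissible selection rule for `X` with limit `p`: the subselected
frequencies `|X ∩ S ∩ {1,…,n}| / |S ∩ {1,…,n}|` converge to `p` as `n → ∞`. -/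
def Admissible (X S : Set ℕ) (p : ℝ) : Prop :=
  Tendsto (fun n : ℕ => (cnt (X ∩ S) n : ℝ) / (cnt S n : ℝ)) atTop (𝓝 p)

lemma cnt_eq_ncard (X : Set ℕ) (n : ℕ) : cnt X n = (X ∩ Set.Icc 1 n).ncard :=
  Nat.card_coe_set_eq _

lemma cnt_le_self (X : Set ℕ) (n : ℕ) : cnt X n ≤ n := by
  rw [cnt_eq_ncard]
  calc (X ∩ Set.Icc 1 n).ncard ≤ (Set.Icc 1 n).ncard := Set.ncard_inter_le_ncard_right _ _
    _ = n := by simp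

lemma cnt_add_ncard_inter_Ioc (X : Set ℕ) {a b : ℕ} (hab : a ≤ b) :
    cnt X b = cnt X a + (X ∩ Set.Ioc a b).ncard := by
  have hsplit : Set.Icc 1 b = Set.Icc 1 a ∪ Set.Ioc a b := by
    ext k
    simp only [Set.mem_union, Set.mem_Icc, Set.mem_Ioc]
    omega
  have hdisj : Disjoint (Set.Icc 1 a) (Set.Ioc a b) :=
    Set.disjoint_left.mpr fun k hk hk' => absurd hk.2 (not_le.mpr hk'.1)
  rw [cnt_eq_ncard, cnt_eq_ncard, hsplit, Set.inter_union_distrib_left,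
    Set.ncard_union_eq (hdisj.mono Set.inter_subset_right Set.inter_subset_right)]

lemma cnt_mono (X : Set ℕ) : Monotone (cnt X) := fun _ _ hab => by
  rw [cnt_add_ncard_inter_Ioc X hab]
  exact Nat.le_add_right _ _

lemma cnt_add_of_Ioc_subset {X : Set ℕ} {a b : ℕ} (hab : a ≤ b) (h : Set.Ioc a b ⊆ X) :
    cnt X b = cnt X a + (b - a) := by
  rw [cnt_add_ncard_inter_Ioc X hab, Set.inter_eq_right.mpr h, Set.ncard_Ioc_nat]

lemma cnt_eq_of_disjoint_Ioc {X : Set ℕ} {a b : ℕ} (hab : a ≤ b) (h : Disjoint X (Set.Ioc a b)) :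
    cnt X b = cnt X a := by
  rw [cnt_add_ncard_inter_Ioc X hab, h.inter_eq, Set.ncard_empty, Nat.add_zero]

lemma cnt_succ (X : Set ℕ) [DecidablePred (· ∈ X)] (n : ℕ) :
    cnt X (n + 1) = cnt X n + if n + 1 ∈ X then 1 else 0 := by
  have hIoc : Set.Ioc n (n + 1) = {n + 1} := by
    ext k
    simp only [Set.mem_Ioc, Set.mem_singleton_iff]
    omega
  rw [cnt_add_ncard_inter_Ioc X n.le_succ, hIoc]
  split_ifs with h
  · rw [Set.inter_eq_right.mpr (Set.singleton_subset_iff.mpr h), Set.ncard_singleton]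
  · rw [Set.inter_singleton_eq_empty.mpr h, Set.ncard_empty]

lemma hasDensity_of_abs_sub_le {X : Set ℕ} {p C : ℝ} (h : ∀ n, |(cnt X n : ℝ) - p * n| ≤ C) :
    HasDensity X p := by
  rw [HasDensity, ← tendsto_sub_nhds_zero_iff]
  refine squeeze_zero_norm' ?_ (tendsto_const_div_atTop_nhds_zero_nat C)
  filter_upwards [eventually_gt_atTop 0] with n hn
  have hn' : (0 : ℝ) < n := Nat.cast_pos.mpr hn
  rw [Real.norm_eq_abs, div_sub' hn'.ne', abs_div, abs_of_pos hn', mul_comm]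
  exact div_le_div_of_nonneg_right (h n) hn'.le

lemma cnt_two_mul_add_one_of_mem_iff_not_mem {X : Set ℕ} (hX : ∀ k, 2 * k ∈ X ↔ 2 * k + 1 ∉ X)
    (m : ℕ) : cnt X (2 * m + 1) = m + cnt X 1 := by
  classical
  induction m with
  | zero => simp
  | succ m ih =>
    have hpair := hX (m + 1)
    rw [show 2 * (m + 1) = 2 * m + 1 + 1 by ring] at hpair ⊢
    rw [cnt_succ, cnt_succ, ih]
    by_cases h : 2 * m + 1 + 1 ∈ X
    · rw [if_pos h, if_neg (hpair.mp h)]; ring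
    · rw [if_neg h, if_pos (not_not.mp (mt hpair.mpr h))]; ring

lemma hasDensity_half_of_mem_iff_not_mem {X : Set ℕ} (hX : ∀ k, 2 * k ∈ X ↔ 2 * k + 1 ∉ X) :
    HasDensity X (1 / 2) := by
  have hodd := cnt_two_mul_add_one_of_mem_iff_not_mem hX
  have hone := cnt_le_self X 1
  have hbounds : ∀ n, n ≤ 2 * cnt X n + 2 ∧ 2 * cnt X n ≤ n + 2 := by
    intro n
    obtain ⟨m, rfl | rfl⟩ := Nat.even_or_odd' n
    · have hle := cnt_mono X (Nat.le_succ (2 * m))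
      rw [hodd] at hle
      rcases m with _ | m
      · omega
      · have hge := cnt_mono X (show 2 * m + 1 ≤ 2 * (m + 1) by omega)
        rw [hodd] at hge
        omega
    · have := hodd m
      omega
  refine hasDensity_of_abs_sub_le (C := 1) fun n => abs_le.mpr ?_
  have hlo : (n : ℝ) ≤ 2 * cnt X n + 2 := by exact_mod_cast (hbounds n).1
  have hhi : 2 * (cnt X n : ℝ) ≤ n + 2 := by exact_mod_cast (hbounds n).2
  constructor <;> linarith

lemma cnt_image_two_mul (X : Set ℕ) (m : ℕ) : cnt ((2 * ·) '' X) (2 * m) = cnt X m := by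
  have hpre : (2 * ·) ⁻¹' Set.Icc 1 (2 * m) = Set.Icc 1 m := by
    ext k
    simp only [Set.mem_preimage, Set.mem_Icc]
    omega
  rw [cnt_eq_ncard, cnt_eq_ncard, ← Set.image_inter_preimage, hpre,
    Set.ncard_image_of_injective _ (mul_right_injective₀ two_ne_zero)]

lemma HasDensity.of_image_two_mul {X : Set ℕ} {c : ℝ} (h : HasDensity ((2 * ·) '' X) c) :
    HasDensity X (2 * c) := by
  refine ((h.comp (tendsto_id.const_mul_atTop' two_pos)).const_mul 2).congr fun m => ?_
  simp only [Function.comp_apply, id, cnt_image_two_mul, Nat.cast_mul, Nat.cast_ofNat]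
  ring

lemma HasDensity.tendsto_cnt_two_mul_sub {X : Set ℕ} {d : ℝ} (h : HasDensity X d) :
    Tendsto (fun n : ℕ => ((cnt X (2 * n) : ℝ) - cnt X n) / n) atTop (𝓝 d) := by
  have hlim := ((h.comp (tendsto_id.const_mul_atTop' two_pos)).const_mul 2).sub h
  rw [show 2 * d - d = d by ring] at hlim
  refine hlim.congr fun n => ?_
  simp only [Function.comp_apply, id, Nat.cast_mul, Nat.cast_ofNat]
  ring

lemma HasDensity.eq_of_cnt_two_mul {X : Set ℕ} {d : ℝ} (h : HasDensity X d) {u : ℕ → ℕ}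
    (hu : Tendsto u atTop atTop) {r : ℕ} (hr : ∀ s, cnt X (2 * u s) = cnt X (u s) + r * u s) :
    d = r := by
  refine tendsto_nhds_unique (h.tendsto_cnt_two_mul_sub.comp hu) (tendsto_const_nhds.congr' ?_)
  filter_upwards [hu.eventually_gt_atTop 0] with s hs
  have hs' : (u s : ℝ) ≠ 0 := Nat.cast_ne_zero.mpr hs.ne'
  simp only [Function.comp_apply, hr, Nat.cast_add, Nat.cast_mul]
  field_simp
  ring

def interleave (X : Set ℕ) : Set ℕ := {n | Even n ↔ n / 2 ∈ X}

lemma two_mul_mem_interleave_iff (X : Set ℕ) (k : ℕ) :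
    2 * k ∈ interleave X ↔ 2 * k + 1 ∉ interleave X := by
  simp [interleave, show (2 * k + 1) / 2 = k by omega]

lemma setOf_even_inter_interleave (X : Set ℕ) : {n | Even n} ∩ interleave X = (2 * ·) '' X := by
  ext n
  simp only [Set.mem_inter_iff, Set.mem_ofPred_eq, interleave, Set.mem_image]
  constructor
  · rintro ⟨⟨k, rfl⟩, hmem⟩
    refine ⟨k, ?_, by ring⟩
    simpa [← two_mul] using hmem.mp ⟨k, rfl⟩
  · rintro ⟨k, hk, rfl⟩
    simpa using hk

def evenLog : Set ℕ := {k | Even (Nat.log 2 k)}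

lemma log_two_eq_of_mem_Ioc {t k : ℕ} (hk : k ∈ Set.Ioc (2 ^ t - 1) (2 * (2 ^ t - 1))) :
    Nat.log 2 k = t := by
  obtain ⟨hk₁, hk₂⟩ := hk
  have hpos := Nat.one_le_two_pow (n := t)
  refine Nat.log_eq_of_pow_le_of_lt_pow (by omega) ?_
  rw [pow_succ]
  omega

lemma cnt_evenLog_two_mul (t : ℕ) :
    cnt evenLog (2 * (2 ^ t - 1)) =
      cnt evenLog (2 ^ t - 1) + (if Even t then 1 else 0) * (2 ^ t - 1) := by
  have hle : 2 ^ t - 1 ≤ 2 * (2 ^ t - 1) := by omega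
  split_ifs with ht
  · rw [cnt_add_of_Ioc_subset hle fun k hk => ?_]
    · omega
    · show Even _
      rwa [log_two_eq_of_mem_Ioc hk]
  · rw [cnt_eq_of_disjoint_Ioc hle (Set.disjoint_right.mpr fun k hk => ?_)]
    · ring
    · show ¬ Even _
      rwa [log_two_eq_of_mem_Ioc hk]

lemma tendsto_two_pow_sub_one (a : ℕ) :
    Tendsto (fun s : ℕ => 2 ^ (2 * s + a) - 1) atTop atTop := by
  refine tendsto_atTop_mono (fun s => ?_) tendsto_id
  have := Nat.lt_two_pow_self (n := s)
  have := Nat.pow_le_pow_right two_pos (show s ≤ 2 * s + a by omega)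
  simp only [id]
  omega

lemma not_hasDensity_evenLog (d : ℝ) : ¬ HasDensity evenLog d := by
  intro h
  have hone := h.eq_of_cnt_two_mul (tendsto_two_pow_sub_one 0) (r := 1) fun s => by
    simpa using cnt_evenLog_two_mul (2 * s + 0)
  have hzero := h.eq_of_cnt_two_mul (tendsto_two_pow_sub_one 1) (r := 0) fun s => by
    simpa using cnt_evenLog_two_mul (2 * s + 1)
  rw [hone] at hzero
  norm_num at hzero

/-- The density logic is not closed under intersections: there are sets `A`, `B`
whose natural densities exist while the natural density of `A ∩ B` does not. -/
theorem density_logic_not_closed_inter :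
    ∃ A B : Set ℕ, (∃ a : ℝ, HasDensity A a) ∧ (∃ b : ℝ, HasDensity B b) ∧
      ¬ ∃ c : ℝ, HasDensity (A ∩ B) c := by
  refine ⟨{n | Even n}, interleave evenLog,
    ⟨1 / 2, hasDensity_half_of_mem_iff_not_mem fun k => by simp⟩,
    ⟨1 / 2, hasDensity_half_of_mem_iff_not_mem (two_mul_mem_interleave_iff evenLog)⟩, ?_⟩
  rintro ⟨c, hc⟩
  rw [setOf_even_inter_interleave] at hc
  exact not_hasDensity_evenLog _ hc.of_image_two_mul
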